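/- arXiv:math/0404411 — 7 statements merged into one kernel-verified Lean document; each statement's English description precedes it below -/
import Mathlib

section
/- For every k with 0 ≤ k ≤ n, the polynomial f_k = ∏_{u ∈ V_k} (X - C u) in one variable X over MvPolynomial (Fin n) (ZMod p) is monic of degree p^k, and for every natural number d that is not of the form p^i with 0 ≤ i ≤ k, the coefficient of X^d in f_k is zero; consequently f_k = ∑_{i=0}^{k} (-1)^{k-i} (C d_{k,i}) X^{p^i} with d_{k,k} = 1. -/
open MvPolynomial

/-- `V p n k` : the set of `𝔽_p`-linear combinations of the first `k` variables. -/
noncomputable def V (p n k : ℕ) [Fact p.Prime] : Finset (MvPolynomial (Fin n) (ZMod p)) :=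
  (Finset.univ : Finset (Fin n → ZMod p)).image
    (fun c => ∑ j ∈ Finset.univ.filter (fun j : Fin n => j.val < k), C (c j) * X j)

/-- `f p n k = ∏_{u ∈ V_k} (X - C u)`. -/
noncomputable def f (p n k : ℕ) [Fact p.Prime] :
    Polynomial (MvPolynomial (Fin n) (ZMod p)) :=
  ∏ u ∈ V p n k, (Polynomial.X - Polynomial.C u)

/-- Dickson invariant `d_{k,i}`. -/
noncomputable def d (p n k i : ℕ) [Fact p.Prime] : MvPolynomial (Fin n) (ZMod p) :=
  (-1) ^ (k - i) * (f p n k).coeff (p ^ i)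

/-- Borel generator: `hGen p n j` is `h_{j+1}` of the paper. -/
noncomputable def hGen (p n : ℕ) [Fact p.Prime] (j : Fin n) : MvPolynomial (Fin n) (ZMod p) :=
  (Polynomial.eval (X j) (f p n j.val)) ^ (p - 1)

/-- Action of `GL_n(𝔽_p)` on `S` by linear substitution `g · y_j = ∑_i g_{ij} y_i`. -/
noncomputable def gact (p n : ℕ) [Fact p.Prime] (g : GL (Fin n) (ZMod p)) :
    MvPolynomial (Fin n) (ZMod p) →ₐ[ZMod p] MvPolynomial (Fin n) (ZMod p) :=
  aeval (fun j : Fin n => ∑ i : Fin n, C ((g : Matrix (Fin n) (Fin n) (ZMod p)) i j) * X i)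

/-!
Write `y_{k+1}` for the variable `X ⟨k, _⟩`. Since `V_{k+1} = ⋃_{a ∈ 𝔽_p} (a y_{k+1} + V_k)`, we get
`f_{k+1}(X) = ∏_a f_k(X - a y_{k+1})`. Suppose `f_k` is a linearized polynomial, i.e. only the
monomials `X^{p^i}` with `i ≤ k` occur in it. Then `f_k` is additive and `𝔽_p`-linear, so with
`e = f_k(y_{k+1})` the product is `∏_a (f_k - a e) = f_k^p - e^{p-1} f_k`, because the `a e` are the
`p` roots of `Z^p - e^{p-1} Z`. The right-hand side is again linearized, now with `i ≤ k + 1`, so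
induction shows that every `f_k` is linearized; it is monic of degree `|V_k| = p^k`.
-/

namespace Polynomial

variable {R : Type*} [CommRing R]

theorem prod_X_sub_C_algebraMap_mul (p : ℕ) [Fact p.Prime] [IsDomain R] [Algebra (ZMod p) R]
    (e : R) :
    ∏ a : ZMod p, (X - C (algebraMap (ZMod p) R a * e)) = X ^ p - C (e ^ (p - 1)) * X := by
  have hp := (Fact.out : p.Prime).one_lt
  rcases eq_or_ne e 0 with rfl | he
  · simp [zero_pow (Nat.sub_ne_zero_of_lt hp)]
  set P : R[X] := X ^ p - C (e ^ (p - 1)) * X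
  have hP : P.Monic := monic_X_pow_sub (by
    refine (degree_C_mul_X_le _).trans_lt ?_
    exact_mod_cast hp)
  have hroot (a : ZMod p) : P.IsRoot (algebraMap (ZMod p) R a * e) := by
    have : e ^ p = e ^ (p - 1) * e := by rw [← pow_succ, Nat.sub_add_cancel hp.le]
    simp only [P, IsRoot, eval_sub, eval_pow, eval_X, eval_mul, eval_C, mul_pow, ← map_pow,
      ZMod.pow_card, this]
    ring
  have hinj : Function.Injective fun a : ZMod p => algebraMap (ZMod p) R a * e :=
    fun a b h => (algebraMap (ZMod p) R).injective (mul_right_cancel₀ he h)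
  classical
  refine (eq_of_monic_of_dvd_of_natDegree_le (monic_prod_of_monic _ _ fun a _ => monic_X_sub_C _)
    hP ?_ ?_).symm
  · have hs := Multiset.Nodup.map hinj Finset.univ.nodup
    rw [← Finset.prod_map_val]
    convert (Multiset.prod_X_sub_C_dvd_iff_le_roots hP.ne_zero _).2
      ((Multiset.le_iff_subset hs).2 fun x hx => ?_) using 1
    · rw [Multiset.map_map]; rfl
    obtain ⟨a, -, rfl⟩ := Multiset.mem_map.1 hx
    exact (mem_roots hP.ne_zero).2 (hroot a)
  · rw [natDegree_prod_of_monic _ _ fun a _ => monic_X_sub_C _]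
    simp only [natDegree_X_sub_C, Finset.sum_const, Finset.card_univ, ZMod.card, smul_eq_mul,
      mul_one, P]
    compute_degree
    exact max_le le_rfl hp.le

def IsLinearized (p k : ℕ) (g : R[X]) : Prop :=
  ∀ m : ℕ, (¬ ∃ i, i ≤ k ∧ m = p ^ i) → g.coeff m = 0

theorem isLinearized_X (p : ℕ) : IsLinearized p 0 (X : R[X]) := fun _ hm =>
  coeff_X_of_ne_one fun h => hm ⟨0, le_rfl, by rw [h, pow_zero]⟩

namespace IsLinearized

variable {p k : ℕ} {g h : R[X]}

theorem mono (hg : IsLinearized p k g) {l : ℕ} (hkl : k ≤ l) : IsLinearized p l g :=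
  fun m hm => hg m fun ⟨i, hi, hmi⟩ => hm ⟨i, hi.trans hkl, hmi⟩

theorem sub (hg : IsLinearized p k g) (hh : IsLinearized p k h) : IsLinearized p k (g - h) :=
  fun m hm => by rw [coeff_sub, hg m hm, hh m hm, sub_zero]

theorem C_mul (hg : IsLinearized p k g) (a : R) : IsLinearized p k (C a * g) :=
  fun m hm => by rw [coeff_C_mul, hg m hm, mul_zero]

theorem pow_expChar [ExpChar R p] (hg : IsLinearized p k g) : IsLinearized p (k + 1) (g ^ p) := by
  intro m hm
  rw [← map_frobenius_expand, coeff_map, coeff_expand (expChar_pos R p)]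
  split_ifs with hpm
  · obtain ⟨m, rfl⟩ := hpm
    rw [Nat.mul_div_cancel_left _ (expChar_pos R p), hg m fun ⟨i, hi, hmi⟩ =>
      hm ⟨i + 1, Nat.succ_le_succ hi, by rw [hmi, pow_succ']⟩, map_zero]
  · exact map_zero _

theorem eq_sum (hp : 1 < p) (hg : IsLinearized p k g) :
    g = ∑ i ∈ Finset.range (k + 1), C (g.coeff (p ^ i)) * X ^ p ^ i := by
  ext m
  simp only [finsetSum_coeff, coeff_C_mul_X_pow]
  by_cases hm : ∃ i, i ≤ k ∧ m = p ^ i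
  · obtain ⟨i, hi, rfl⟩ := hm
    rw [Finset.sum_eq_single_of_mem i (Finset.mem_range_succ_iff.2 hi)
      fun j _ hji => if_neg fun h => hji (Nat.pow_right_injective hp h).symm, if_pos rfl]
  · exact (hg m hm).trans (Finset.sum_eq_zero fun i hi =>
      if_neg fun h => hm ⟨i, Finset.mem_range_succ_iff.1 hi, h⟩).symm

theorem comp_X_sub_C [Fact p.Prime] [CharP R p] (hg : IsLinearized p k g) (w : R) :
    g.comp (X - C w) = g - C (g.eval w) := by
  rw [hg.eq_sum (Fact.out : p.Prime).one_lt]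
  simp only [sum_comp, mul_comp, C_comp, X_pow_comp, sub_pow_char_pow, eval_finsetSum, eval_mul,
    eval_C, eval_pow, eval_X, map_sum, map_mul, map_pow, mul_sub, Finset.sum_sub_distrib]

theorem eval_algebraMap_mul [Fact p.Prime] [Algebra (ZMod p) R] (hg : IsLinearized p k g)
    (a : ZMod p) (y : R) :
    g.eval (algebraMap (ZMod p) R a * y) = algebraMap (ZMod p) R a * g.eval y := by
  rw [hg.eq_sum (Fact.out : p.Prime).one_lt]
  simp only [eval_finsetSum, eval_mul, eval_C, eval_pow, eval_X, mul_pow, ← map_pow,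
    ZMod.pow_card_pow, Finset.mul_sum, mul_left_comm]

theorem prod_comp_X_sub_C_algebraMap_mul [Fact p.Prime] [IsDomain R] [Algebra (ZMod p) R]
    (hg : IsLinearized p k g) (y : R) :
    ∏ a : ZMod p, g.comp (X - C (algebraMap (ZMod p) R a * y))
      = g ^ p - C (g.eval y ^ (p - 1)) * g := by
  have : CharP R p := charP_of_injective_algebraMap' (ZMod p) p
  calc ∏ a : ZMod p, g.comp (X - C (algebraMap (ZMod p) R a * y))
      = (∏ a : ZMod p, (X - C (algebraMap (ZMod p) R a * g.eval y))).comp g := by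
        rw [prod_comp]
        refine Finset.prod_congr rfl fun a _ => ?_
        rw [hg.comp_X_sub_C, hg.eval_algebraMap_mul, sub_comp, X_comp, C_comp]
    _ = g ^ p - C (g.eval y ^ (p - 1)) * g := by
        rw [prod_X_sub_C_algebraMap_mul, sub_comp, X_pow_comp, mul_comp, C_comp, X_comp]

end IsLinearized

end Polynomial

section Dickson

variable (p n : ℕ) [Fact p.Prime]

theorem coeff_single_eq_zero_of_mem_V {k : ℕ} {u : MvPolynomial (Fin n) (ZMod p)}
    (hu : u ∈ V p n k) {j : Fin n} (hj : k ≤ j.val) : coeff (Finsupp.single j 1) u = 0 := by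
  obtain ⟨c, -, rfl⟩ := Finset.mem_image.1 hu
  rw [coeff_sum]
  refine Finset.sum_eq_zero fun i hi => ?_
  rw [coeff_C_mul, coeff_X, if_neg, mul_zero]
  intro h
  obtain rfl := Finsupp.single_left_injective one_ne_zero h
  exact absurd (Finset.mem_filter.1 hi).2 (not_lt.2 hj)

theorem V_zero : V p n 0 = {0} := by
  ext u
  simp [V, eq_comm]

theorem V_succ {k : ℕ} (hk : k < n) :
    V p n (k + 1) = ((Finset.univ : Finset (ZMod p)) ×ˢ V p n k).image
      (fun q => C q.1 * X (⟨k, hk⟩ : Fin n) + q.2) := by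
  have hfilter : Finset.univ.filter (fun j : Fin n => j.val < k + 1)
      = insert ⟨k, hk⟩ (Finset.univ.filter fun j : Fin n => j.val < k) := by
    ext j
    simp only [Finset.mem_filter, Finset.mem_univ, true_and, Finset.mem_insert, Fin.ext_iff]
    omega
  ext u
  simp only [V, Finset.mem_image, Finset.mem_product, Finset.mem_univ, true_and, Prod.exists]
  constructor
  · rintro ⟨c, -, rfl⟩
    refine ⟨c ⟨k, hk⟩, _, ⟨c, rfl⟩, ?_⟩
    rw [hfilter, Finset.sum_insert (by simp)]
  · rintro ⟨a, v, ⟨c, rfl⟩, rfl⟩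
    refine ⟨Function.update c ⟨k, hk⟩ a, ?_⟩
    rw [hfilter, Finset.sum_insert (by simp), Function.update_self]
    congr 1
    refine Finset.sum_congr rfl fun j hj => ?_
    rw [Function.update_of_ne]
    rintro rfl
    simp at hj

theorem V_succ_injOn {k : ℕ} (hk : k < n) :
    Set.InjOn (fun q : ZMod p × MvPolynomial (Fin n) (ZMod p) => C q.1 * X (⟨k, hk⟩ : Fin n) + q.2)
      ((Finset.univ : Finset (ZMod p)) ×ˢ V p n k : Finset _) := by
  rintro ⟨a, u⟩ hu ⟨b, v⟩ hv h
  simp only [Finset.coe_product, Set.mem_prod, Finset.mem_coe] at hu hv h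
  have hab : a = b := by
    simpa [coeff_single_eq_zero_of_mem_V p n hu.2 (j := ⟨k, hk⟩) le_rfl,
      coeff_single_eq_zero_of_mem_V p n hv.2 (j := ⟨k, hk⟩) le_rfl]
      using congrArg (coeff (Finsupp.single (⟨k, hk⟩ : Fin n) 1)) h
  subst hab
  rw [(add_right_inj _).1 h]

theorem card_V {k : ℕ} (hk : k ≤ n) : (V p n k).card = p ^ k := by
  induction k with
  | zero => simp [V_zero]
  | succ k ih =>
    rw [V_succ p n hk, Finset.card_image_of_injOn (V_succ_injOn p n hk), Finset.card_product,
      Finset.card_univ, ZMod.card, ih (by omega), pow_succ, mul_comm]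

theorem f_zero : f p n 0 = Polynomial.X := by
  simp [f, V_zero]

theorem f_succ {k : ℕ} (hk : k < n) :
    f p n (k + 1) = ∏ a : ZMod p, (f p n k).comp
      (Polynomial.X - Polynomial.C (algebraMap (ZMod p) _ a * X (⟨k, hk⟩ : Fin n))) := by
  rw [f, V_succ p n hk, Finset.prod_image fun x hx y hy => V_succ_injOn p n hk hx hy,
    Finset.prod_product]
  refine Finset.prod_congr rfl fun a _ => ?_
  rw [f, Polynomial.prod_comp]
  refine Finset.prod_congr rfl fun u _ => ?_
  simp only [Polynomial.sub_comp, Polynomial.X_comp, Polynomial.C_comp, map_add, algebraMap_eq]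
  ring

theorem isLinearized_f {k : ℕ} (hk : k ≤ n) : (f p n k).IsLinearized p k := by
  induction k with
  | zero => rw [f_zero]; exact Polynomial.isLinearized_X p
  | succ k ih =>
    have hf := ih (by omega)
    rw [f_succ p n hk, hf.prod_comp_X_sub_C_algebraMap_mul]
    exact hf.pow_expChar.sub ((hf.mono k.le_succ).C_mul _)

theorem natDegree_f {k : ℕ} (hk : k ≤ n) : (f p n k).natDegree = p ^ k := by
  rw [f, Polynomial.natDegree_prod_of_monic _ _ fun u _ => Polynomial.monic_X_sub_C u]
  simp [card_V p n hk]

end Dickson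

/-- `f_k` is monic of degree `p^k`, its only possibly-nonzero coefficients sit
in degrees `p^i` for `0 ≤ i ≤ k`, and `f_k = ∑_{i=0}^k (-1)^{k-i} C(d_{k,i}) X^{p^i}` with
`d_{k,k} = 1`. -/
theorem stmt0 (p n : ℕ) [Fact p.Prime] (k : ℕ) (hk : k ≤ n) :
    (f p n k).Monic ∧ (f p n k).natDegree = p ^ k ∧
    (∀ m : ℕ, (¬ ∃ i, i ≤ k ∧ m = p ^ i) → (f p n k).coeff m = 0) ∧
    f p n k = ∑ i ∈ Finset.range (k + 1),
      (-1) ^ (k - i) * Polynomial.C (d p n k i) * Polynomial.X ^ (p ^ i) ∧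
    d p n k k = 1 := by
  have hf := isLinearized_f p n hk
  have hmonic : (f p n k).Monic :=
    Polynomial.monic_prod_of_monic _ _ fun u _ => Polynomial.monic_X_sub_C u
  have hdeg := natDegree_f p n hk
  refine ⟨hmonic, hdeg, hf, ?_, ?_⟩
  · conv_lhs => rw [hf.eq_sum (Fact.out : p.Prime).one_lt]
    refine Finset.sum_congr rfl fun i _ => ?_
    rw [d, map_mul, map_pow, map_neg, map_one, ← mul_assoc, ← mul_pow]
    norm_num
  · rw [d, Nat.sub_self, pow_zero, one_mul, ← hdeg]
    exact hmonic.coeff_natDegree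
end

section
/- For every k with 0 ≤ k ≤ n, the evaluation of f_k is additive and 𝔽_p-linear: for all a, b ∈ S one has f_k.eval (a + b) = f_k.eval a + f_k.eval b, and for every scalar c ∈ 𝔽_p one has f_k.eval (c • a) = c • (f_k.eval a). -/
open MvPolynomial

/-!
If `W` is a finite additive subgroup of an integral domain `R` and `P = ∏_{w ∈ W} (X - w)`, then
`P (X + b) - P X` has degree below `|W|`, and it takes the constant value `P b` at every `u ∈ W`
because translation by `u` permutes `W`. Hence `P (X + b) = P X + P b`. Over `𝔽_p` additivity
already gives `𝔽_p`-linearity, and `V_k` is an `𝔽_p`-subspace of `S`.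
-/

namespace Polynomial

variable {R : Type*} [CommRing R] {W : Finset R}

theorem eval_prod_X_sub_C_add_left_of_mem (h0 : 0 ∈ W) (hsub : ∀ u ∈ W, ∀ w ∈ W, u - w ∈ W)
    {u : R} (hu : u ∈ W) (b : R) :
    (∏ w ∈ W, (X - C w)).eval (u + b) = (∏ w ∈ W, (X - C w)).eval b := by
  simp only [eval_prod, eval_sub, eval_X, eval_C]
  refine Finset.prod_nbij' (· - u) (· + u) (fun w hw ↦ hsub w hw u hu)
    (fun w hw ↦ by simpa using hsub w hw (0 - u) (hsub 0 h0 u hu)) (fun w _ ↦ by simp)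
    (fun w _ ↦ by simp) (fun w _ ↦ by ring)

theorem eval_prod_X_sub_C_add [IsDomain R] (h0 : 0 ∈ W) (hsub : ∀ u ∈ W, ∀ w ∈ W, u - w ∈ W)
    (a b : R) :
    (∏ w ∈ W, (X - C w)).eval (a + b) =
      (∏ w ∈ W, (X - C w)).eval a + (∏ w ∈ W, (X - C w)).eval b := by
  set P := ∏ w ∈ W, (X - C w)
  have hP : P.IsMonicOfDegree W.card :=
    ⟨natDegree_finsetProd_X_sub_C_eq_card W id, monic_prod_X_sub_C id W⟩
  have hPb : (P.comp (X + C b)).IsMonicOfDegree W.card := by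
    simpa using hP.comp one_ne_zero (isMonicOfDegree_X_add_one b)
  suffices P.comp (X + C b) - P = C (P.eval b) by
    simpa [sub_eq_iff_eq_add'] using congrArg (eval a) this
  refine eq_of_natDegree_lt_card_of_eval_eq' _ _ W (fun u hu ↦ ?_) ?_
  · have hPu : P.eval u = 0 := eval_eq_zero_of_dvd_of_eval_eq_zero
      (Finset.dvd_prod_of_mem _ hu) (by simp)
    simp only [eval_sub, eval_comp, eval_add, eval_X, eval_C, hPu, sub_zero]
    exact eval_prod_X_sub_C_add_left_of_mem h0 hsub hu b
  · simpa using hPb.natDegree_sub_lt (Finset.card_ne_zero_of_mem h0) hP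

end Polynomial

theorem zero_mem_V (p n k : ℕ) [Fact p.Prime] : 0 ∈ V p n k :=
  Finset.mem_image.mpr ⟨0, Finset.mem_univ _, by simp⟩

theorem sub_mem_V {p n k : ℕ} [Fact p.Prime] :
    ∀ u ∈ V p n k, ∀ w ∈ V p n k, u - w ∈ V p n k := by
  simp only [V, Finset.mem_image, Finset.mem_univ, true_and]
  rintro _ ⟨c, rfl⟩ _ ⟨d, rfl⟩
  exact ⟨c - d, by simp [sub_mul]⟩

theorem stmt1_general (p n : ℕ) [Fact p.Prime] (k : ℕ)
    (a b : MvPolynomial (Fin n) (ZMod p)) (c : ZMod p) :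
    (f p n k).eval (a + b) = (f p n k).eval a + (f p n k).eval b ∧
    (f p n k).eval (c • a) = c • (f p n k).eval a := by
  have eval_add : ∀ a b, (f p n k).eval (a + b) = (f p n k).eval a + (f p n k).eval b :=
    Polynomial.eval_prod_X_sub_C_add (zero_mem_V p n k) sub_mem_V
  exact ⟨eval_add a b, ZMod.map_smul (AddMonoidHom.mk' (f p n k).eval eval_add) c a⟩

/-- evaluation of `f_k` is additive and `𝔽_p`-linear. -/
theorem stmt1 (p n : ℕ) [Fact p.Prime] (k : ℕ) (hk : k ≤ n)
    (a b : MvPolynomial (Fin n) (ZMod p)) (c : ZMod p) :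
    (f p n k).eval (a + b) = (f p n k).eval a + (f p n k).eval b ∧
    (f p n k).eval (c • a) = c • (f p n k).eval a :=
  stmt1_general p n k a b c
end

section
/- Every Dickson invariant is invariant under the general linear group: for every g ∈ GL_n(𝔽_p) and every i with 0 ≤ i ≤ n-1, the algebra automorphism of S induced by g fixes d_{n,i}, i.e. g · d_{n,i} = d_{n,i}. -/
open MvPolynomial

noncomputable def param (p n : ℕ) [Fact p.Prime] (c : Fin n → ZMod p) :
    MvPolynomial (Fin n) (ZMod p) := ∑ j, C (c j) * X j

lemma param_inj (p n : ℕ) [Fact p.Prime] : Function.Injective (param p n) := by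
  intro c c' h
  funext j
  have := congrArg (fun q => MvPolynomial.coeff (Finsupp.single j 1) q) h
  simpa [param, MvPolynomial.coeff_sum, MvPolynomial.coeff_C_mul, MvPolynomial.coeff_X',
    Finsupp.single_left_inj (one_ne_zero (α := ℕ))] using this

lemma V_top (p n : ℕ) [Fact p.Prime] : V p n n = Finset.univ.image (param p n) := by
  unfold V param
  congr 1
  funext c
  refine Finset.sum_congr ?_ (fun _ _ => rfl)
  simp [Finset.filter_true_of_mem (fun (j : Fin n) _ => j.isLt)]

lemma gact_param (p n : ℕ) [Fact p.Prime] (g : GL (Fin n) (ZMod p)) (c : Fin n → ZMod p) :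
    gact p n g (param p n c) =
      param p n ((g : Matrix (Fin n) (Fin n) (ZMod p)).mulVec c) := by
  simp only [param, gact, map_sum, map_mul, aeval_C, aeval_X, algebraMap_eq,
    Matrix.mulVec, dotProduct, map_sum, Finset.mul_sum, Finset.sum_mul]
  rw [Finset.sum_comm]
  refine Finset.sum_congr rfl fun i _ => Finset.sum_congr rfl fun j _ => ?_
  ring

lemma mulVec_bij (p n : ℕ) [Fact p.Prime] (g : GL (Fin n) (ZMod p)) :
    Function.Bijective ((g : Matrix (Fin n) (Fin n) (ZMod p)).mulVec) := by
  refine Function.bijective_iff_has_inverse.2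
    ⟨(g⁻¹ : GL (Fin n) (ZMod p)).1.mulVec, fun v => ?_, fun v => ?_⟩ <;>
    simp [Matrix.mulVec_mulVec, Matrix.GeneralLinearGroup.coe_inv,
      Matrix.nonsing_inv_mul _ (Matrix.isUnit_iff_isUnit_det _ |>.1 g.isUnit),
      Matrix.mul_nonsing_inv _ (Matrix.isUnit_iff_isUnit_det _ |>.1 g.isUnit)]

lemma f_map (p n : ℕ) [Fact p.Prime] (g : GL (Fin n) (ZMod p)) :
    (f p n n).map ((gact p n g : MvPolynomial (Fin n) (ZMod p) →+* MvPolynomial (Fin n) (ZMod p))) = f p n n := by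
  unfold f
  rw [Polynomial.map_prod]
  simp only [Polynomial.map_sub, Polynomial.map_X, Polynomial.map_C]
  rw [V_top, Finset.prod_image (fun a _ b _ h => param_inj p n h),
      Finset.prod_image (fun a _ b _ h => param_inj p n h)]
  calc ∏ c : Fin n → ZMod p, (Polynomial.X - Polynomial.C (gact p n g (param p n c)))
      = ∏ c : Fin n → ZMod p,
          (Polynomial.X - Polynomial.C (param p n ((g : Matrix (Fin n) (Fin n) (ZMod p)).mulVec c))) := by
        simp [gact_param]
    _ = ∏ c : Fin n → ZMod p, (Polynomial.X - Polynomial.C (param p n c)) :=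
        Fintype.prod_bijective _ (mulVec_bij p n g) _ _ (fun c => rfl)

/-- every Dickson invariant is `GL_n(𝔽_p)`-invariant. -/
theorem stmt3 (p n : ℕ) [Fact p.Prime] (g : GL (Fin n) (ZMod p)) (i : ℕ) (hi : i < n) :
    gact p n g (d p n n i) = d p n n i := by
  have key : gact p n g ((f p n n).coeff (p ^ i)) = (f p n n).coeff (p ^ i) := by
    have h := congrArg (fun q => q.coeff (p ^ i)) (f_map p n g)
    simpa [Polynomial.coeff_map] using h
  simp [d, key]
end

section
/- For every i with 0 ≤ i ≤ n-1, the Dickson invariant d_{n,i} is a homogeneous polynomial of degree p^n - p^i. -/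
open MvPolynomial

lemma multiset_prod_homog {σ R : Type*} [CommRing R] (t : Multiset (MvPolynomial σ R))
    (h : ∀ x ∈ t, x.IsHomogeneous 1) : t.prod.IsHomogeneous (Multiset.card t) := by
  induction t using Multiset.induction with
  | empty => simpa using MvPolynomial.isHomogeneous_one σ R
  | cons a s ih =>
    simp only [Multiset.prod_cons, Multiset.card_cons]
    have := (h a (Multiset.mem_cons_self a s)).mul
      (ih fun x hx => h x (Multiset.mem_cons_of_mem hx))
    rwa [add_comm] at this

lemma multiset_sum_homog {σ R : Type*} [CommRing R] (t : Multiset (MvPolynomial σ R)) (m : ℕ)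
    (h : ∀ x ∈ t, x.IsHomogeneous m) : t.sum.IsHomogeneous m := by
  induction t using Multiset.induction with
  | empty => simpa using MvPolynomial.isHomogeneous_zero σ R m
  | cons a s ih =>
    simp only [Multiset.sum_cons]
    exact (h a (Multiset.mem_cons_self a s)).add
      (ih fun x hx => h x (Multiset.mem_cons_of_mem hx))

/-- `d_{n,i}` is homogeneous of degree `p^n - p^i`. -/
theorem stmt5 (p n : ℕ) [Fact p.Prime] (i : ℕ) (hi : i < n) :
    (d p n n i).IsHomogeneous (p ^ n - p ^ i) := by
  have hp := (Fact.out : p.Prime)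
  have hle : p ^ i ≤ p ^ n := Nat.pow_le_pow_right hp.one_lt.le hi.le
  have hinj : Function.Injective (fun c : Fin n → ZMod p =>
      ∑ j ∈ Finset.univ.filter (fun j : Fin n => j.val < n), C (c j) * X j) := by
    intro a b hab
    funext j0
    have h2 := congrArg (MvPolynomial.coeff (Finsupp.single j0 1)) hab
    simpa [MvPolynomial.coeff_sum, MvPolynomial.coeff_C_mul, MvPolynomial.coeff_X',
      Fin.is_lt, Finsupp.single_eq_single_iff, Finset.sum_ite_eq'] using h2
  have hcard : Multiset.card (V p n n).val = p ^ n := by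
    rw [← Finset.card_def, V, Finset.card_image_of_injective _ hinj, Finset.card_univ]
    simp [ZMod.card]
  have hV : ∀ u ∈ (V p n n).val, u.IsHomogeneous 1 := by
    intro u hu
    rw [Finset.mem_val] at hu
    simp only [V, Finset.mem_image] at hu
    obtain ⟨c, -, rfl⟩ := hu
    apply MvPolynomial.IsHomogeneous.sum
    intro j _
    simpa using (isHomogeneous_C _ (c j)).mul (isHomogeneous_X _ j)
  have key : (f p n n).coeff (p ^ i) =
      (-1) ^ (p ^ n - p ^ i) * ((V p n n).val.esymm (p ^ n - p ^ i)) := by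
    unfold f
    rw [Finset.prod_eq_multiset_prod,
      Multiset.prod_X_sub_C_coeff _ (by rw [hcard]; exact hle), hcard]
  have hE : ((V p n n).val.esymm (p ^ n - p ^ i)).IsHomogeneous (p ^ n - p ^ i) := by
    unfold Multiset.esymm
    apply multiset_sum_homog
    intro x hx
    simp only [Multiset.mem_map] at hx
    obtain ⟨t, ht, rfl⟩ := hx
    rw [Multiset.mem_powersetCard] at ht
    have := multiset_prod_homog t (fun u hu => hV u (Multiset.mem_of_le ht.1 hu))
    rwa [ht.2] at this
  have hsgn : ∀ m : ℕ, ((-1 : MvPolynomial (Fin n) (ZMod p)) ^ m).IsHomogeneous 0 := by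
    intro m
    have h1 : ((-1 : MvPolynomial (Fin n) (ZMod p)) ^ m) = C ((-1 : ZMod p) ^ m) := by
      rw [map_pow, map_neg, map_one]
    rw [h1]; exact isHomogeneous_C _ _
  unfold d
  rw [key]
  have := (hsgn (n - i)).mul ((hsgn (p ^ n - p ^ i)).mul hE)
  simpa using this
end

section
/- Every generator h_k is invariant under the Borel subgroup: for every g ∈ B_n (invertible upper-triangular matrix over 𝔽_p) and every k with 1 ≤ k ≤ n, the algebra automorphism of S induced by g fixes h_k, i.e. g · h_k = h_k. -/
open MvPolynomial

section aux
variable (p n : ℕ) [Fact p.Prime]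

lemma mem_V {k : ℕ} {u : MvPolynomial (Fin n) (ZMod p)} :
    u ∈ V p n k ↔ ∃ c : Fin n → ZMod p,
      (∑ j ∈ Finset.univ.filter (fun j : Fin n => j.val < k), C (c j) * X j) = u := by
  simp [V, Finset.mem_image]

lemma gact_X (g : GL (Fin n) (ZMod p)) (j : Fin n) :
    gact p n g (X j) = ∑ i : Fin n, C ((g : Matrix (Fin n) (Fin n) (ZMod p)) i j) * X i :=
  aeval_X _ j

lemma gact_C (g : GL (Fin n) (ZMod p)) (a : ZMod p) :
    gact p n g (C a) = C a := by
  simp [gact, algebraMap_eq]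

lemma V_affine {k : ℕ} (a : ZMod p) {u v : MvPolynomial (Fin n) (ZMod p)}
    (hu : u ∈ V p n k) (hv : v ∈ V p n k) : C a * (u - v) ∈ V p n k := by
  rw [mem_V] at hu hv ⊢
  obtain ⟨c, rfl⟩ := hu
  obtain ⟨c', rfl⟩ := hv
  refine ⟨fun j => a * (c j - c' j), ?_⟩
  rw [← Finset.sum_sub_distrib, Finset.mul_sum]
  refine Finset.sum_congr rfl fun j _ => ?_
  rw [map_mul, map_sub]; ring

lemma gact_mem_V (g : GL (Fin n) (ZMod p))
    (hg : ∀ i j : Fin n, j < i → (g : Matrix (Fin n) (Fin n) (ZMod p)) i j = 0)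
    {k : ℕ} {u : MvPolynomial (Fin n) (ZMod p)} (hu : u ∈ V p n k) :
    gact p n g u ∈ V p n k := by
  obtain ⟨c, rfl⟩ := mem_V p n |>.mp hu
  rw [map_sum]
  simp only [map_mul, gact_C, gact_X]
  have key : (∑ j ∈ Finset.univ.filter (fun j : Fin n => j.val < k),
        C (c j) * ∑ i : Fin n, C ((g : Matrix (Fin n) (Fin n) (ZMod p)) i j) * X i)
      = ∑ i ∈ Finset.univ.filter (fun i : Fin n => i.val < k),
        C (∑ j ∈ Finset.univ.filter (fun j : Fin n => j.val < k),
          c j * (g : Matrix (Fin n) (Fin n) (ZMod p)) i j) * X i := by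
    calc (∑ j ∈ Finset.univ.filter (fun j : Fin n => j.val < k),
        C (c j) * ∑ i : Fin n, C ((g : Matrix (Fin n) (Fin n) (ZMod p)) i j) * X i)
        = ∑ i : Fin n, ∑ j ∈ Finset.univ.filter (fun j : Fin n => j.val < k),
            C (c j) * (C ((g : Matrix (Fin n) (Fin n) (ZMod p)) i j) * X i) := by
          simp only [Finset.mul_sum]; rw [Finset.sum_comm]
      _ = ∑ i : Fin n, C (∑ j ∈ Finset.univ.filter (fun j : Fin n => j.val < k),
            c j * (g : Matrix (Fin n) (Fin n) (ZMod p)) i j) * X i := by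
          refine Finset.sum_congr rfl fun i _ => ?_
          rw [map_sum, Finset.sum_mul]
          refine Finset.sum_congr rfl fun j _ => ?_
          rw [map_mul]; ring
      _ = _ := by
          refine (Finset.sum_subset (Finset.subset_univ _) fun i _ hi => ?_).symm
          have hik : k ≤ i.val := by simpa using hi
          have hz : (∑ j ∈ Finset.univ.filter (fun j : Fin n => j.val < k),
              c j * (g : Matrix (Fin n) (Fin n) (ZMod p)) i j) = 0 := by
            refine Finset.sum_eq_zero fun j hj => ?_
            have hjk : j.val < k := by simpa using hj
            rw [hg i j (by rw [Fin.lt_def]; omega), mul_zero]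
          rw [hz, map_zero, zero_mul]
  rw [key]
  exact (mem_V p n).mpr ⟨_, rfl⟩

lemma gact_inj (g : GL (Fin n) (ZMod p)) : Function.Injective (gact p n g) := by
  have hcomp : (gact p n g⁻¹).comp (gact p n g) =
      AlgHom.id (ZMod p) (MvPolynomial (Fin n) (ZMod p)) := by
    apply MvPolynomial.algHom_ext
    intro j
    rw [AlgHom.comp_apply, AlgHom.id_apply, gact_X, map_sum]
    simp only [map_mul, gact_C, gact_X]
    have key : (∑ i : Fin n, C ((g : Matrix (Fin n) (Fin n) (ZMod p)) i j) *
          ∑ l : Fin n, C (((g⁻¹ : GL (Fin n) (ZMod p)) : Matrix (Fin n) (Fin n) (ZMod p)) l i) * X l)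
        = ∑ l : Fin n, C ((((g⁻¹ : GL (Fin n) (ZMod p)) : Matrix (Fin n) (Fin n) (ZMod p)) *
            (g : Matrix (Fin n) (Fin n) (ZMod p))) l j) * X l := by
      calc _ = ∑ l : Fin n, ∑ i : Fin n, C ((g : Matrix (Fin n) (Fin n) (ZMod p)) i j) *
            (C (((g⁻¹ : GL (Fin n) (ZMod p)) : Matrix (Fin n) (Fin n) (ZMod p)) l i) * X l) := by
            simp only [Finset.mul_sum]; rw [Finset.sum_comm]
        _ = _ := by
            refine Finset.sum_congr rfl fun l _ => ?_
            rw [Matrix.mul_apply, map_sum, Finset.sum_mul]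
            refine Finset.sum_congr rfl fun i _ => ?_
            rw [map_mul]; ring
    rw [key]
    have h1 : (((g⁻¹ : GL (Fin n) (ZMod p)) : Matrix (Fin n) (Fin n) (ZMod p)) *
        (g : Matrix (Fin n) (Fin n) (ZMod p))) = 1 := g.inv_mul
    rw [h1]
    simp [Matrix.one_apply, ite_mul]
  intro x y hxy
  have := congrArg (gact p n g⁻¹) hxy
  have hx := congrFun (congrArg DFunLike.coe hcomp) x
  have hy := congrFun (congrArg DFunLike.coe hcomp) y
  simp only [AlgHom.comp_apply, AlgHom.id_apply] at hx hy
  rw [hx, hy] at this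
  exact this

lemma diag_ne_zero (g : GL (Fin n) (ZMod p))
    (hg : ∀ i j : Fin n, j < i → (g : Matrix (Fin n) (Fin n) (ZMod p)) i j = 0)
    (k : Fin n) : (g : Matrix (Fin n) (Fin n) (ZMod p)) k k ≠ 0 := by
  have hdet : IsUnit (g : Matrix (Fin n) (Fin n) (ZMod p)).det :=
    (Matrix.isUnit_iff_isUnit_det _).mp g.isUnit
  have ht : (g : Matrix (Fin n) (Fin n) (ZMod p)).BlockTriangular id :=
    fun i j h => hg i j h
  rw [Matrix.det_of_upperTriangular ht] at hdet
  have := isUnit_iff_ne_zero.mp hdet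
  exact Finset.prod_ne_zero_iff.mp this k (Finset.mem_univ k)

end aux

/-- each `h_k` is invariant under the Borel subgroup of invertible
upper-triangular matrices. -/
theorem stmt6 (p n : ℕ) [Fact p.Prime] (g : GL (Fin n) (ZMod p))
    (hg : ∀ i j : Fin n, j < i → (g : Matrix (Fin n) (Fin n) (ZMod p)) i j = 0)
    (k : Fin n) :
    gact p n g (hGen p n k) = hGen p n k := by
  have ha : (g : Matrix (Fin n) (Fin n) (ZMod p)) k k ≠ 0 := diag_ne_zero p n g hg k
  set a : ZMod p := (g : Matrix (Fin n) (Fin n) (ZMod p)) k k with ha_def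
  set w : MvPolynomial (Fin n) (ZMod p) :=
    ∑ i ∈ Finset.univ.filter (fun i : Fin n => i.val < k.val),
      C ((g : Matrix (Fin n) (Fin n) (ZMod p)) i k) * X i with hw_def
  have hw : w ∈ V p n k.val := (mem_V p n).mpr ⟨_, rfl⟩
  have hXk : gact p n g (X k) = C a * X k + w := by
    rw [gact_X]
    rw [← Finset.sum_subset
      (Finset.subset_univ (insert k (Finset.univ.filter (fun i : Fin n => i.val < k.val))))
      (fun i _ hi => ?_)]
    · rw [Finset.sum_insert (by simp)]
    · simp only [Finset.mem_insert, Finset.mem_filter, Finset.mem_univ, true_and,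
        not_or, not_lt] at hi
      obtain ⟨h1, h2⟩ := hi
      have hki : k < i := by
        rw [Fin.lt_def]
        rcases lt_or_eq_of_le h2 with h | h
        · exact h
        · exact absurd (Fin.ext h.symm) h1
      rw [hg i k hki, map_zero, zero_mul]
  set σ : MvPolynomial (Fin n) (ZMod p) → MvPolynomial (Fin n) (ZMod p) :=
    fun u => C a⁻¹ * (gact p n g u - w) with hσ_def
  have hσV : ∀ u ∈ V p n k.val, σ u ∈ V p n k.val :=
    fun u hu => V_affine p n a⁻¹ (gact_mem_V p n g hg hu) hw
  have hCainv : (C a⁻¹ : MvPolynomial (Fin n) (ZMod p)) ≠ 0 := by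
    rw [Ne, MvPolynomial.C_eq_zero]; exact inv_ne_zero ha
  have hσinj : Set.InjOn σ (V p n k.val : Set (MvPolynomial (Fin n) (ZMod p))) := by
    intro u _ v _ huv
    have := mul_left_cancel₀ hCainv huv
    exact gact_inj p n g (by linear_combination this)
  have himg : Finset.image σ (V p n k.val) = V p n k.val := by
    refine Finset.eq_of_subset_of_card_le (fun x hx => ?_) ?_
    · obtain ⟨u, hu, rfl⟩ := Finset.mem_image.mp hx
      exact hσV u hu
    · rw [Finset.card_image_of_injOn hσinj]
  have hCaσ : ∀ u : MvPolynomial (Fin n) (ZMod p), C a * σ u = gact p n g u - w := by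
    intro u
    rw [hσ_def, ← mul_assoc, ← map_mul, mul_inv_cancel₀ ha, map_one, one_mul]
  have hP : gact p n g (Polynomial.eval (X k) (f p n k.val))
      = ∏ u ∈ V p n k.val, (C a * (X k - σ u)) := by
    rw [f, Polynomial.eval_prod, map_prod]
    refine Finset.prod_congr rfl fun u _ => ?_
    rw [Polynomial.eval_sub, Polynomial.eval_X, Polynomial.eval_C, map_sub, hXk,
      mul_sub, hCaσ]
    ring
  have hProd : (∏ u ∈ V p n k.val, (C a * (X k - σ u)))
      = C a ^ (V p n k.val).card * Polynomial.eval (X k) (f p n k.val) := by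
    rw [Finset.prod_mul_distrib, Finset.prod_const]
    congr 1
    rw [f, Polynomial.eval_prod]
    simp only [Polynomial.eval_sub, Polynomial.eval_X, Polynomial.eval_C]
    calc (∏ u ∈ V p n k.val, (X k - σ u))
        = ∏ v ∈ Finset.image σ (V p n k.val), (X k - v) :=
          (Finset.prod_image fun x hx y hy h => hσinj hx hy h).symm
      _ = ∏ v ∈ V p n k.val, (X k - v) := by rw [himg]
  rw [hGen, map_pow, hP, hProd, mul_pow, ← pow_mul, mul_comm ((V p n k.val).card) (p-1),
    pow_mul, ← map_pow, ZMod.pow_card_sub_one_eq_one ha, map_one, one_pow, one_mul]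
end

section
/- (Mui's theorem on Borel invariants) The elements h_1, …, h_n are algebraically independent over 𝔽_p, and the subalgebra of B_n-invariants of S = MvPolynomial (Fin n) 𝔽_p equals the 𝔽_p-subalgebra generated by h_1, …, h_n; in other words, S^{B_n} = 𝔽_p[h_1, …, h_n] is a polynomial algebra. -/
/-!
Write `S_k` for the polynomials in `y_1, …, y_k` and induct on `k`. View a `B_n`-invariant
`x ∈ S_{k+1}` as a polynomial `q ∈ S_k[X]` in `X = y_{k+1}`. The Borel elements
`y_{k+1} ↦ a y_{k+1} + v` (`a ≠ 0`, `v ∈ V_k`, all other variables fixed) give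
`q(aX + v) = q(X)`. Invariance under the translations makes `q = G ∘ f_k`: `f_k`, whose roots are
exactly `V_k`, divides `q - q(0)`, and the quotient is again translation invariant. Since `|V_k|`
is a power of `p`, `f_k(aX) = a f_k(X)`, so invariance under scalings kills the coefficients of `G`
in degrees not divisible by `p - 1`, i.e. `x = G₂(h_{k+1})`. Over `S_k`, `h_{k+1}` is the
polynomial `f_k^{p-1}` of positive degree in `y_{k+1}`, so such a representation is unique: this
makes the coefficients of `G₂` invariant, so that induction applies, and it also gives the
algebraic independence.
-/

open MvPolynomial

theorem Finset.prod_comp_of_mapsTo_of_injOn {ι M : Type*} [CommMonoid M] {s : Finset ι}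
    {e : ι → ι} (hm : Set.MapsTo e s s) (hi : Set.InjOn e s) (g : ι → M) :
    ∏ i ∈ s, g (e i) = ∏ i ∈ s, g i :=
  Finset.prod_nbij e hm hi ((s.finite_toSet.injOn_iff_bijOn_of_mapsTo hm).1 hi).surjOn
    fun _ _ => rfl

namespace Polynomial

variable {R : Type*}

theorem comp_left_injective [Ring R] [NoZeroDivisors R] {q : R[X]} (hq : 0 < q.natDegree) :
    Function.Injective fun p : R[X] => p.comp q := by
  intro a b h
  have hab : (a - b).comp q = 0 := by simpa [sub_comp, sub_eq_zero] using h
  rcases comp_eq_zero_iff.1 hab with hab | ⟨-, hq'⟩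
  · exact sub_eq_zero.1 hab
  · rw [hq', natDegree_C] at hq
    exact absurd hq (lt_irrefl 0)

theorem coeff_eq_zero_of_comp_C_mul_X_eq [CommRing R] [IsDomain R] {p : R[X]} {c : R}
    (h : p.comp (C c * X) = p) {i : ℕ} (hi : c ^ i ≠ 1) : p.coeff i = 0 := by
  have := congrArg (coeff · i) h
  rw [comp_C_mul_X_coeff] at this
  refine (mul_eq_zero.1 ?_).resolve_right (sub_ne_zero.2 hi)
  rw [mul_sub, mul_one, this, sub_self]

theorem expand_contract_of_coeff_eq_zero [CommSemiring R] {r : ℕ} (hr : r ≠ 0) {p : R[X]}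
    (h : ∀ i, ¬ r ∣ i → p.coeff i = 0) : expand R r (contract r p) = p := by
  ext i
  rw [coeff_expand (Nat.pos_of_ne_zero hr), coeff_contract hr]
  split_ifs with hi
  · rw [Nat.div_mul_cancel hi]
  · exact (h i hi).symm

theorem mem_lifts_subtype_iff [Ring R] {A : Subring R} {q : R[X]} :
    q ∈ lifts A.subtype ↔ ∀ i, q.coeff i ∈ A := by
  simp [lifts_iff_coeff_lifts]

theorem coeff_mem_of_monic_mul [CommRing R] {A : Subring R} {f g : R[X]} (hf : f.Monic)
    (hfA : ∀ i, f.coeff i ∈ A) (hfgA : ∀ i, (f * g).coeff i ∈ A) : ∀ i, g.coeff i ∈ A := by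
  nontriviality R
  obtain ⟨F, hF, -, hFm⟩ := lifts_and_degree_eq_and_monic (mem_lifts_subtype_iff.2 hfA) hf
  obtain ⟨Q, hQ⟩ := (mem_lifts _).1 (mem_lifts_subtype_iff.2 hfgA)
  have : g = (Q /ₘ F).map A.subtype := by
    rw [map_divByMonic _ hFm, hQ, hF, mul_divByMonic_cancel_left _ hf]
  exact mem_lifts_subtype_iff.1 ((mem_lifts g).2 ⟨_, this.symm⟩)

theorem coeff_prod_X_sub_C_mem [CommRing R] {A : Subring R} {T : Finset R}
    (hTA : ∀ u ∈ T, u ∈ A) : ∀ i, (∏ u ∈ T, (X - C u)).coeff i ∈ A :=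
  mem_lifts_subtype_iff.1 <| (lifts_iff_liftsRing _ _).2 <| Subring.prod_mem _ fun u hu =>
    sub_mem (X_mem_lifts _) (C_mem_lifts A.subtype ⟨u, hTA u hu⟩)

section Domain

variable [CommRing R] [IsDomain R]

theorem prod_X_sub_C_dvd {T : Finset R} {q : R[X]} (h : ∀ u ∈ T, q.eval u = 0) :
    ∏ u ∈ T, (X - C u) ∣ q := by
  rcases eq_or_ne q 0 with rfl | hq
  · exact dvd_zero _
  rw [Finset.prod_eq_multiset_prod, Multiset.prod_X_sub_C_dvd_iff_le_roots hq,
    Multiset.le_iff_subset T.nodup]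
  intro u hu
  exact (mem_roots hq).2 (h u hu)

theorem prod_X_sub_C_comp_C_mul_X_add_C {T : Finset R} {a b : R} (ha : a ≠ 0)
    (hT : ∀ u ∈ T, a * u + b ∈ T) :
    (∏ u ∈ T, (X - C u)).comp (C a * X + C b) = C a ^ T.card * ∏ u ∈ T, (X - C u) := by
  have hinj : Set.InjOn (fun u => a * u + b) T := fun u _ v _ h => by
    simpa [ha] using h
  rw [prod_comp, ← Finset.prod_comp_of_mapsTo_of_injOn hT hinj, ← Finset.prod_const,
    ← Finset.prod_mul_distrib]
  refine Finset.prod_congr rfl fun u _ => ?_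
  rw [sub_comp, X_comp, C_comp, C_add, C_mul]
  ring

theorem exists_eq_comp_prod_X_sub_C_of_comp_X_add_C_eq {A : Subring R} {T : Finset R}
    (hTA : ∀ u ∈ T, u ∈ A) (hT0 : 0 ∈ T) (hTsub : ∀ u ∈ T, ∀ v ∈ T, u - v ∈ T) {q : R[X]}
    (hqA : ∀ i, q.coeff i ∈ A) (hq : ∀ v ∈ T, q.comp (X + C v) = q) :
    ∃ G : R[X], (∀ i, G.coeff i ∈ A) ∧ q = G.comp (∏ u ∈ T, (X - C u)) := by
  set f := ∏ u ∈ T, (X - C u)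
  have hfm : f.Monic := monic_prod_X_sub_C id T
  have hfA : ∀ i, f.coeff i ∈ A := coeff_prod_X_sub_C_mem hTA
  have hfT : ∀ v ∈ T, f.comp (X + C v) = f := fun v hv => by
    simpa using prod_X_sub_C_comp_C_mul_X_add_C one_ne_zero (b := v) fun u hu => by
      simpa [sub_neg_eq_add] using hTsub u hu _ (hTsub 0 hT0 v hv)
  induction hd : q.natDegree using Nat.strong_induction_on generalizing q with
  | _ d ih =>
  have hroots : ∀ v ∈ T, (q - C (q.coeff 0)).eval v = 0 := fun v hv => by
    have := congrArg (eval 0) (hq v hv)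
    simp only [eval_comp, eval_add, eval_X, eval_C, zero_add] at this
    rw [eval_sub, eval_C, this, coeff_zero_eq_eval_zero, sub_self]
  obtain ⟨q₁, hq₁⟩ := prod_X_sub_C_dvd hroots
  have hq₁A : ∀ i, q₁.coeff i ∈ A := coeff_mem_of_monic_mul hfm hfA fun i => by
    rw [← hq₁, coeff_sub, coeff_C]
    exact sub_mem (hqA i) (by split_ifs <;> simp [hqA 0, A.zero_mem])
  have hq₁T : ∀ v ∈ T, q₁.comp (X + C v) = q₁ := fun v hv => by
    apply mul_left_cancel₀ hfm.ne_zero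
    calc f * q₁.comp (X + C v) = (f * q₁).comp (X + C v) := by rw [mul_comp, hfT v hv]
      _ = f * q₁ := by rw [← hq₁, sub_comp, C_comp, hq v hv]
  obtain ⟨G₁, hG₁A, hG₁⟩ : ∃ G₁ : R[X], (∀ i, G₁.coeff i ∈ A) ∧ q₁ = G₁.comp f := by
    rcases eq_or_ne q₁ 0 with h | h
    · exact ⟨0, fun _ => by simp [A.zero_mem], by simp [h]⟩
    · have hf : 0 < f.natDegree := by simpa [f] using ⟨0, hT0⟩
      have := congrArg natDegree hq₁
      rw [natDegree_sub_C, hfm.natDegree_mul' h] at this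
      exact ih _ (by omega) hq₁A hq₁T rfl
  refine ⟨C (q.coeff 0) + X * G₁, fun i => ?_, ?_⟩
  · rcases i with _ | i
    · simpa using hqA 0
    · simpa using hG₁A i
  · rw [add_comp, C_comp, mul_comp, X_comp, ← hG₁, ← hq₁, add_sub_cancel]

end Domain

end Polynomial

theorem MvPolynomial.apply_mem_of_mem_supported {σ R A : Type*} [CommSemiring R] [Semiring A]
    [Algebra R A] (φ : MvPolynomial σ R →ₐ[R] A) {s : Set σ} {B : Subalgebra R A}
    (h : ∀ j ∈ s, φ (X j) ∈ B) {x : MvPolynomial σ R} (hx : x ∈ supported R s) : φ x ∈ B :=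
  (Algebra.adjoin_le (Set.image_subset_iff.2 h) : supported R s ≤ B.comap φ) hx

namespace Mui

variable {p n : ℕ} [Fact p.Prime]

local notation "𝔽ₚ" => ZMod p
local notation "S" => MvPolynomial (Fin n) (ZMod p)

abbrev lowVars (k : ℕ) : Set (Fin n) := {j | j.val < k}

local notation "𝒮" k:max => MvPolynomial.supported (ZMod p) (lowVars k)

variable (p n) in
noncomputable def linComb (k : ℕ) : (Fin n → 𝔽ₚ) →ₗ[𝔽ₚ] S where
  toFun c := ∑ j ∈ Finset.univ.filter (fun j : Fin n => j.val < k), C (c j) * X j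
  map_add' c d := by simp [add_mul, Finset.sum_add_distrib]
  map_smul' a c := by simp [Finset.mul_sum, smul_eq_C_mul, mul_assoc]

theorem linComb_apply (k : ℕ) (c : Fin n → 𝔽ₚ) :
    linComb p n k c = ∑ j ∈ Finset.univ.filter (fun j : Fin n => j.val < k), C (c j) * X j :=
  rfl

theorem mem_V {k : ℕ} {u : S} : u ∈ V p n k ↔ u ∈ LinearMap.range (linComb p n k) := by
  simp [V, linComb]

theorem exists_card_V_eq_pow (k : ℕ) : ∃ m, (V p n k).card = p ^ m := by
  refine ⟨Module.finrank 𝔽ₚ (LinearMap.range (linComb p n k)), ?_⟩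
  have : (V p n k : Set S) = LinearMap.range (linComb p n k) := Set.ext fun _ => mem_V
  rw [← Set.ncard_coe_finset, this, ← Nat.card_coe_set_eq, SetLike.coe_sort_coe,
    Module.natCard_eq_pow_finrank (K := ZMod p), Nat.card_zmod]

theorem zero_mem_V (k : ℕ) : (0 : S) ∈ V p n k := mem_V.2 (zero_mem _)

theorem C_mul_add_mem_V {k : ℕ} (a : 𝔽ₚ) {u v : S} (hu : u ∈ V p n k) (hv : v ∈ V p n k) :
    C a * u + v ∈ V p n k := by
  rw [mem_V, ← smul_eq_C_mul] at *
  exact add_mem (Submodule.smul_mem _ a hu) hv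

theorem sub_mem_V {k : ℕ} {u v : S} (hu : u ∈ V p n k) (hv : v ∈ V p n k) : u - v ∈ V p n k := by
  rw [mem_V] at *
  exact sub_mem hu hv

theorem mem_supported_of_mem_V {k : ℕ} {u : S} (hu : u ∈ V p n k) : u ∈ 𝒮 k := by
  obtain ⟨c, rfl⟩ := mem_V.1 hu
  rw [linComb_apply]
  exact Subalgebra.sum_mem _ fun j hj =>
    Subalgebra.mul_mem _ (Subalgebra.algebraMap_mem (𝒮 k) (c j))
      (X_mem_supported.2 (Finset.mem_filter.1 hj).2)

theorem f_comp_C_mul_X_add_C {k : ℕ} {a : 𝔽ₚ} (ha : a ≠ 0) {v : S} (hv : v ∈ V p n k) :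
    (f p n k).comp (Polynomial.C (C a) * Polynomial.X + Polynomial.C v) =
      Polynomial.C (C a) * f p n k := by
  obtain ⟨m, hm⟩ := exists_card_V_eq_pow (p := p) (n := n) k
  rw [f, Polynomial.prod_X_sub_C_comp_C_mul_X_add_C (by simpa using ha)
    fun u hu => C_mul_add_mem_V a hu hv, hm, ← map_pow, ← map_pow, ZMod.pow_card_pow]

theorem gact_X (g : GL (Fin n) 𝔽ₚ) (j : Fin n) :
    gact p n g (X j) = ∑ i, C ((g : Matrix (Fin n) (Fin n) 𝔽ₚ) i j) * X i :=
  aeval_X _ _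

theorem gact_C (g : GL (Fin n) 𝔽ₚ) (a : 𝔽ₚ) : gact p n g (C a) = C a :=
  aeval_C _ _

theorem gact_mul (g g' : GL (Fin n) 𝔽ₚ) :
    gact p n (g * g') = (gact p n g).comp (gact p n g') := by
  refine algHom_ext fun j => ?_
  simp only [gact_X, AlgHom.comp_apply, map_sum, map_mul, gact_C, Units.val_mul,
    Matrix.mul_apply, Finset.mul_sum, Finset.sum_mul]
  rw [Finset.sum_comm]
  exact Finset.sum_congr rfl fun _ _ => Finset.sum_congr rfl fun _ _ => by ring

theorem gact_one : gact p n 1 = AlgHom.id 𝔽ₚ S :=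
  algHom_ext fun j => by simp [gact_X, Matrix.one_apply]

theorem gact_injective (g : GL (Fin n) 𝔽ₚ) : Function.Injective (gact p n g) :=
  fun x y h => by simpa [← AlgHom.comp_apply, ← gact_mul, gact_one] using congrArg (gact p n g⁻¹) h

section Borel

variable {g : GL (Fin n) (ZMod p)}
  (hg : (g : Matrix (Fin n) (Fin n) (ZMod p)).IsUpperTriangular)
include hg

theorem diag_ne_zero (j : Fin n) : (g : Matrix (Fin n) (Fin n) 𝔽ₚ) j j ≠ 0 := by
  have := (Matrix.isUnit_iff_isUnit_det _).1 g.isUnit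
  rw [Matrix.det_of_isUpperTriangular hg] at this
  exact Finset.prod_ne_zero_iff.1 this.ne_zero j (Finset.mem_univ j)

theorem gact_X_eq (j : Fin n) :
    gact p n g (X j) = C ((g : Matrix (Fin n) (Fin n) 𝔽ₚ) j j) * X j +
      ∑ i ∈ Finset.univ.filter (fun i : Fin n => i.val < j.val),
        C ((g : Matrix (Fin n) (Fin n) 𝔽ₚ) i j) * X i := by
  rw [gact_X, ← Finset.sum_filter_add_sum_filter_not _ (fun i : Fin n => i.val < j.val),
    add_comm, Finset.sum_eq_single_of_mem j (by simp)]
  intro i hi hij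
  simp only [Finset.mem_filter, Finset.mem_univ, true_and, not_lt] at hi
  rw [hg (show j < i from lt_of_le_of_ne (Fin.le_def.2 hi) (Ne.symm hij)), map_zero, zero_mul]

theorem gact_X_mem_V {k : ℕ} {j : Fin n} (hj : j.val < k) : gact p n g (X j) ∈ V p n k := by
  refine mem_V.2 ⟨fun i => (g : Matrix (Fin n) (Fin n) 𝔽ₚ) i j, ?_⟩
  rw [linComb_apply, gact_X, Finset.sum_filter_of_ne]
  intro i _ hi
  by_contra hik
  exact hi (by rw [hg (show j < i by rw [Fin.lt_def]; omega), map_zero, zero_mul])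

theorem gact_mem_V {k : ℕ} {u : S} (hu : u ∈ V p n k) : gact p n g u ∈ V p n k := by
  obtain ⟨c, rfl⟩ := mem_V.1 hu
  rw [linComb_apply, map_sum, mem_V]
  refine Submodule.sum_mem _ fun j hj => ?_
  rw [map_mul, gact_C, ← smul_eq_C_mul]
  exact Submodule.smul_mem _ _ (mem_V.1 (gact_X_mem_V hg (Finset.mem_filter.1 hj).2))

theorem map_f_gact (k : ℕ) : (f p n k).map (gact p n g : S →+* S) = f p n k := by
  rw [f, Polynomial.map_prod]
  simp only [Polynomial.map_sub, Polynomial.map_X, Polynomial.map_C]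
  exact Finset.prod_comp_of_mapsTo_of_injOn (fun u hu => gact_mem_V hg hu)
    (gact_injective g).injOn fun u => Polynomial.X - Polynomial.C u

theorem gact_eval_f (j : Fin n) :
    gact p n g ((f p n j).eval (X j)) =
      C ((g : Matrix (Fin n) (Fin n) 𝔽ₚ) j j) * (f p n j).eval (X j) := by
  set w := ∑ i ∈ Finset.univ.filter (fun i : Fin n => i.val < j.val),
    C ((g : Matrix (Fin n) (Fin n) 𝔽ₚ) i j) * X i
  have hw : w ∈ V p n j := mem_V.2 ⟨_, rfl⟩
  have h := Polynomial.eval_map_apply (f := (gact p n g : S →+* S)) (p := f p n j) (X j)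
  rw [map_f_gact hg, AlgHom.coe_toRingHom] at h
  calc gact p n g ((f p n j).eval (X j))
      = ((f p n j).comp (Polynomial.C (C ((g : Matrix (Fin n) (Fin n) 𝔽ₚ) j j)) * Polynomial.X +
          Polynomial.C w)).eval (X j) := by
        rw [← h, gact_X_eq hg, Polynomial.eval_comp, Polynomial.eval_add, Polynomial.eval_mul,
          Polynomial.eval_C, Polynomial.eval_X, Polynomial.eval_C]
    _ = _ := by
        rw [f_comp_C_mul_X_add_C (diag_ne_zero hg j) hw, Polynomial.eval_mul, Polynomial.eval_C]

theorem gact_hGen (j : Fin n) : gact p n g (hGen p n j) = hGen p n j := by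
  rw [hGen, map_pow, gact_eval_f hg, mul_pow, ← map_pow,
    ZMod.pow_card_sub_one_eq_one (diag_ne_zero hg j), map_one, one_mul]

end Borel

theorem coeff_f_mem (k : ℕ) : ∀ i, (f p n k).coeff i ∈ 𝒮 k :=
  Polynomial.coeff_prod_X_sub_C_mem (A := (𝒮 k).toSubring) fun _ hu => mem_supported_of_mem_V hu

theorem hGen_mem_supported {k : ℕ} {j : Fin n} (hj : j.val < k) : hGen p n j ∈ 𝒮 k := by
  rw [hGen, f, Polynomial.eval_prod]
  refine Subalgebra.pow_mem _ (Subalgebra.prod_mem _ fun u hu => ?_) _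
  simp only [Polynomial.eval_sub, Polynomial.eval_X, Polynomial.eval_C]
  exact Subalgebra.sub_mem _ (X_mem_supported.2 hj)
    (supported_mono (show lowVars j.val ⊆ lowVars k from fun _ hi => lt_trans hi hj)
      (mem_supported_of_mem_V hu))

variable (p n) in
noncomputable def isolate (κ : Fin n) : S →ₐ[𝔽ₚ] Polynomial S :=
  aeval fun j => if j = κ then Polynomial.X else Polynomial.C (X j)

theorem isolate_X_self (κ : Fin n) : isolate p n κ (X κ) = Polynomial.X := by
  simp [isolate]

theorem isolate_X_of_ne {κ j : Fin n} (h : j ≠ κ) :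
    isolate p n κ (X j) = Polynomial.C (X j) := by
  simp [isolate, h]

theorem eval_isolate (κ : Fin n) (x : S) : (isolate p n κ x).eval (X κ) = x := by
  have : ((Polynomial.aeval (X κ : S)).restrictScalars 𝔽ₚ).comp (isolate p n κ) = AlgHom.id _ _ :=
    algHom_ext fun j => by by_cases h : j = κ <;> simp [isolate, h]
  simpa using AlgHom.congr_fun this x

theorem isolate_of_mem_supported {κ : Fin n} {s : Set (Fin n)} (hκ : κ ∉ s) {x : S}
    (hx : x ∈ supported 𝔽ₚ s) : isolate p n κ x = Polynomial.C x := by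
  have : supported 𝔽ₚ s ≤ AlgHom.equalizer (isolate p n κ) Polynomial.CAlgHom :=
    Algebra.adjoin_le <| by
      rintro _ ⟨j, hj, rfl⟩
      simp [isolate_X_of_ne (ne_of_mem_of_not_mem hj hκ)]
  exact this hx

theorem coeff_isolate_mem {k : ℕ} (hk : k < n) {x : S} (hx : x ∈ 𝒮 (k + 1)) (i : ℕ) :
    (isolate p n ⟨k, hk⟩ x).coeff i ∈ 𝒮 k := by
  have : 𝒮 (k + 1) ≤ (Polynomial.mapAlgHom (𝒮 k).val).range.comap (isolate p n ⟨k, hk⟩) :=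
    Algebra.adjoin_le <| by
      rintro _ ⟨j, hj, rfl⟩
      by_cases h : j = ⟨k, hk⟩
      · exact ⟨Polynomial.X, by simp [h, isolate_X_self]⟩
      · refine ⟨Polynomial.C ⟨X j, X_mem_supported.2 ?_⟩, by simp [isolate_X_of_ne h]⟩
        have : j.val ≠ k := fun h' => h (Fin.ext h')
        simp only [lowVars, Set.mem_ofPred_eq] at hj ⊢
        omega
  obtain ⟨q, hq⟩ := (AlgHom.mem_range _).1 (this hx)
  rw [show isolate p n ⟨k, hk⟩ x = Polynomial.mapAlgHom (𝒮 k).val q from hq.symm,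
    Polynomial.coe_mapAlgHom, Polynomial.coeff_map]
  exact (q.coeff i).2

theorem isolate_eval {κ : Fin n} {s : Set (Fin n)} (hκ : κ ∉ s) {G : Polynomial S}
    (hG : ∀ i, G.coeff i ∈ supported 𝔽ₚ s) (t : S) :
    isolate p n κ (G.eval t) = G.comp (isolate p n κ t) := by
  have : G.map (isolate p n κ : S →+* Polynomial S) = G.map Polynomial.C :=
    Polynomial.ext fun i => by simp [isolate_of_mem_supported hκ (hG i)]
  rw [← AlgHom.coe_toRingHom, ← Polynomial.eval_map_apply, this, Polynomial.eval_map]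
  rfl

theorem isolate_hGen (κ : Fin n) : isolate p n κ (hGen p n κ) = f p n κ ^ (p - 1) := by
  rw [hGen, map_pow, isolate_eval (s := lowVars κ) (by simp) (coeff_f_mem κ), isolate_X_self,
    Polynomial.comp_X]

theorem exists_isolate_gact_eq_comp (κ : Fin n) {a : 𝔽ₚ} (ha : a ≠ 0) {v : S}
    (hv : v ∈ V p n κ) :
    ∃ g : GL (Fin n) 𝔽ₚ, (g : Matrix (Fin n) (Fin n) 𝔽ₚ).IsUpperTriangular ∧ ∀ x : S,
      isolate p n κ (gact p n g x) =
        (isolate p n κ x).comp (Polynomial.C (C a) * Polynomial.X + Polynomial.C v) := by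
  obtain ⟨c, rfl⟩ := mem_V.1 hv
  set M := (1 : Matrix (Fin n) (Fin n) 𝔽ₚ).updateCol κ
    (Pi.single κ a + fun i => if i.val < κ.val then c i else 0)
  have hM : M.IsUpperTriangular := by
    intro i j hij
    have hij : j < i := hij
    rcases eq_or_ne j κ with rfl | hj
    · simp [M, hij.ne', not_lt.2 hij.le]
    · simp [M, Matrix.updateCol_ne hj, hij.ne']
  have hdet : M.det = a := by
    rw [Matrix.det_of_isUpperTriangular hM]
    simp [M, Matrix.updateCol_apply, Pi.single_apply]
  set g := Matrix.nonsingInvUnit M (hdet ▸ ha.isUnit)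
  have hgM : (g : Matrix (Fin n) (Fin n) 𝔽ₚ) = M := rfl
  have hgκ : gact p n g (X κ) = C a * X κ + linComb p n κ c := by
    simp [gact_X, hgM, M, Pi.single_apply, add_mul, Finset.sum_add_distrib, linComb_apply,
      Finset.sum_filter, apply_ite C, ite_mul]
  have hg : ∀ j, j ≠ κ → gact p n g (X j) = X j := fun j hj => by
    simp [gact_X, hgM, M, Matrix.updateCol_ne hj, Matrix.one_apply]
  have key : (isolate p n κ).comp (gact p n g) =
      ((Polynomial.aeval (Polynomial.C (C a) * Polynomial.X +
        Polynomial.C (linComb p n κ c))).restrictScalars 𝔽ₚ).comp (isolate p n κ) := by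
    refine algHom_ext fun j => ?_
    rcases eq_or_ne j κ with rfl | hj
    · simp [hgκ, isolate_X_self, isolate_of_mem_supported (lt_irrefl j.val)
        (mem_supported_of_mem_V (mem_V.2 ⟨c, rfl⟩))]
    · simp [hg j hj, isolate_X_of_ne hj]
  refine ⟨g, hM, fun x => ?_⟩
  simpa [Polynomial.comp_eq_aeval] using AlgHom.congr_fun key x

theorem natDegree_f_pos (k : ℕ) : 0 < (f p n k).natDegree := by
  simpa [f, Polynomial.natDegree_finsetProd_X_sub_C_eq_card _ id] using ⟨0, zero_mem_V k⟩

theorem gact_mem_supported {g : GL (Fin n) 𝔽ₚ}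
    (hg : (g : Matrix (Fin n) (Fin n) 𝔽ₚ).IsUpperTriangular) {k : ℕ} {x : S} (hx : x ∈ 𝒮 k) :
    gact p n g x ∈ 𝒮 k :=
  apply_mem_of_mem_supported _ (fun _ hj => mem_supported_of_mem_V (gact_X_mem_V hg hj)) hx

variable (p n) in
def IsBorelInvariant (x : S) : Prop :=
  ∀ g : GL (Fin n) 𝔽ₚ, (g : Matrix (Fin n) (Fin n) 𝔽ₚ).IsUpperTriangular → gact p n g x = x

theorem isolate_comp_eq_of_isBorelInvariant {x : S} (hx : IsBorelInvariant p n x) (κ : Fin n)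
    {a : 𝔽ₚ} (ha : a ≠ 0) {v : S} (hv : v ∈ V p n κ) :
    (isolate p n κ x).comp (Polynomial.C (C a) * Polynomial.X + Polynomial.C v) =
      isolate p n κ x := by
  obtain ⟨g, hg, h⟩ := exists_isolate_gact_eq_comp κ ha hv
  rw [← h, hx g hg]

theorem eq_of_eval_hGen_eq {k : ℕ} (hk : k < n) {G H : Polynomial S}
    (hG : ∀ i, G.coeff i ∈ 𝒮 k) (hH : ∀ i, H.coeff i ∈ 𝒮 k)
    (h : G.eval (hGen p n ⟨k, hk⟩) = H.eval (hGen p n ⟨k, hk⟩)) :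
    G = H := by
  have hκ : (⟨k, hk⟩ : Fin n) ∉ lowVars k := lt_irrefl k
  have := congrArg (isolate p n ⟨k, hk⟩) h
  rw [isolate_eval hκ hG, isolate_eval hκ hH, isolate_hGen] at this
  refine Polynomial.comp_left_injective ?_ this
  rw [Polynomial.natDegree_pow]
  exact Nat.mul_pos (Nat.sub_pos_of_lt (Fact.out : p.Prime).one_lt) (natDegree_f_pos k)

theorem exists_eq_eval_hGen {k : ℕ} (hk : k < n) {x : S} (hx : x ∈ 𝒮 (k + 1))
    (hinv : IsBorelInvariant p n x) :
    ∃ G : Polynomial S, (∀ i, G.coeff i ∈ 𝒮 k) ∧ x = G.eval (hGen p n ⟨k, hk⟩) := by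
  set κ : Fin n := ⟨k, hk⟩
  obtain ⟨G, hGA, hG⟩ := Polynomial.exists_eq_comp_prod_X_sub_C_of_comp_X_add_C_eq
    (A := (𝒮 k).toSubring) (fun _ hu => mem_supported_of_mem_V hu) (zero_mem_V k)
    (fun _ hu _ hv => sub_mem_V hu hv) (coeff_isolate_mem hk hx)
    fun v hv => by simpa using isolate_comp_eq_of_isBorelInvariant hinv κ one_ne_zero hv
  change isolate p n κ x = G.comp (f p n k) at hG
  have hscale : ∀ a : 𝔽ₚ, a ≠ 0 → G.comp (Polynomial.C (C a) * Polynomial.X) = G :=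
    fun a ha => by
      refine Polynomial.comp_left_injective (natDegree_f_pos k) ?_
      have h0 := f_comp_C_mul_X_add_C ha (zero_mem_V (p := p) (n := n) k)
      have h1 := isolate_comp_eq_of_isBorelInvariant hinv κ ha (zero_mem_V k)
      simp only [map_zero, add_zero] at h0 h1
      simp only [Polynomial.comp_assoc, Polynomial.mul_comp, Polynomial.C_comp, Polynomial.X_comp]
      rw [← h0, ← Polynomial.comp_assoc, ← hG, h1]
  have hcoeff : ∀ i, ¬ (p - 1) ∣ i → G.coeff i = 0 := fun i hi => by
    obtain ⟨a, ha⟩ : ∃ a : 𝔽ₚˣ, a ^ i ≠ 1 := by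
      by_contra! h
      exact hi (by simpa using (FiniteField.forall_pow_eq_one_iff 𝔽ₚ i).1 h)
    refine Polynomial.coeff_eq_zero_of_comp_C_mul_X_eq (hscale a a.ne_zero) ?_
    rw [← map_pow, Ne, ← map_one C, C_inj, ← Units.val_pow_eq_pow_val, Units.val_eq_one]
    exact ha
  have hp : p - 1 ≠ 0 := Nat.sub_ne_zero_of_lt (Fact.out : p.Prime).one_lt
  refine ⟨G.contract (p - 1), fun i => Polynomial.coeff_contract hp G i ▸ hGA _, ?_⟩
  have hG' : isolate p n κ x = (G.contract (p - 1)).comp (f p n k ^ (p - 1)) := by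
    conv_lhs => rw [hG, ← Polynomial.expand_contract_of_coeff_eq_zero hp hcoeff]
    rw [Polynomial.expand_eq_comp_X_pow, Polynomial.comp_assoc, Polynomial.X_pow_comp]
  rw [← eval_isolate κ x, hG', Polynomial.eval_comp, Polynomial.eval_pow, hGen]

theorem isBorelInvariant_coeff {k : ℕ} (hk : k < n) {G : Polynomial S}
    (hG : ∀ i, G.coeff i ∈ 𝒮 k) (hinv : IsBorelInvariant p n (G.eval (hGen p n ⟨k, hk⟩))) (i : ℕ) :
    IsBorelInvariant p n (G.coeff i) := by
  intro g hg
  have : G.map (gact p n g : S →+* S) = G := by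
    refine eq_of_eval_hGen_eq hk (fun i => ?_) hG ?_
    · rw [Polynomial.coeff_map]
      exact gact_mem_supported hg (hG i)
    · conv_lhs => rw [← gact_hGen hg]
      exact (Polynomial.eval_map_apply _ _).trans (hinv g hg)
  simpa using congrArg (Polynomial.coeff · i) this

theorem supported_lowVars_zero : (𝒮 0 : Subalgebra 𝔽ₚ S) = ⊥ := by
  simp [lowVars]

theorem mem_adjoin_hGen_of_isBorelInvariant {k : ℕ} (hk : k ≤ n) {x : S} (hx : x ∈ 𝒮 k)
    (hinv : IsBorelInvariant p n x) : x ∈ Algebra.adjoin 𝔽ₚ (hGen p n '' lowVars k) := by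
  induction k generalizing x with
  | zero =>
    rw [supported_lowVars_zero] at hx
    exact Algebra.mem_bot.1 hx |>.elim fun a ha => ha ▸ Subalgebra.algebraMap_mem _ a
  | succ k ih =>
    obtain ⟨G, hG, rfl⟩ := exists_eq_eval_hGen hk hx hinv
    rw [Polynomial.eval_eq_sum_range]
    refine Subalgebra.sum_mem _ fun i _ => Subalgebra.mul_mem _ ?_ (Subalgebra.pow_mem _ ?_ _)
    · exact Algebra.adjoin_mono (Set.image_mono fun _ (hj : _ < k) => Nat.lt_succ_of_lt hj)
        (ih (Nat.le_of_succ_le hk) (hG i) (isBorelInvariant_coeff hk hG hinv i))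
    · exact Algebra.subset_adjoin ⟨_, Nat.lt_succ_self k, rfl⟩

theorem eq_zero_of_aeval_hGen_eq_zero {k : ℕ} (hk : k ≤ n) {P : S} (hP : P ∈ 𝒮 k)
    (h : aeval (hGen p n) P = 0) : P = 0 := by
  induction k generalizing P with
  | zero =>
    rw [supported_lowVars_zero] at hP
    obtain ⟨a, rfl⟩ := Algebra.mem_bot.1 hP
    simpa using h
  | succ k ih =>
    set κ : Fin n := ⟨k, hk⟩
    have hQ := coeff_isolate_mem hk hP
    have hmap : (isolate p n κ P).map ((aeval (hGen p n) : S →ₐ[𝔽ₚ] S) : S →+* S) = 0 := by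
      refine eq_of_eval_hGen_eq hk (fun i => ?_) (fun i => by simp) ?_
      · rw [Polynomial.coeff_map]
        exact apply_mem_of_mem_supported (aeval (hGen p n))
          (fun j hj => by rw [aeval_X]; exact hGen_mem_supported hj) (hQ i)
      · rw [Polynomial.eval_zero, ← aeval_X (R := ZMod p) (hGen p n) κ]
        exact (Polynomial.eval_map_apply _ _).trans (by rw [eval_isolate]; exact h)
    have hQ0 : isolate p n κ P = 0 := Polynomial.ext fun i => by
      rw [Polynomial.coeff_zero]
      exact ih (Nat.le_of_succ_le hk) (hQ i)
        (by simpa using congrArg (Polynomial.coeff · i) hmap)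
    rw [← eval_isolate κ P, hQ0, Polynomial.eval_zero]

theorem isBorelInvariant_of_mem_adjoin {x : S}
    (hx : x ∈ Algebra.adjoin 𝔽ₚ (Set.range (hGen p n))) : IsBorelInvariant p n x := fun g hg =>
  (Algebra.adjoin_le (Set.range_subset_iff.2 (gact_hGen hg)) :
    _ ≤ AlgHom.equalizer (gact p n g) (AlgHom.id _ _)) hx

end Mui

/-- Mui: `h_1, …, h_n` are algebraically independent and generate the algebra
of invariants of the Borel subgroup `B_n` of invertible upper-triangular matrices. -/
theorem stmt7 (p n : ℕ) [Fact p.Prime] :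
    AlgebraicIndependent (ZMod p) (hGen p n) ∧
    ∀ x : MvPolynomial (Fin n) (ZMod p),
      (∀ g : GL (Fin n) (ZMod p),
        (∀ i j : Fin n, j < i → (g : Matrix (Fin n) (Fin n) (ZMod p)) i j = 0) →
          gact p n g x = x) ↔
        x ∈ Algebra.adjoin (ZMod p) (Set.range (hGen p n)) := by
  have htop : ∀ x : MvPolynomial (Fin n) (ZMod p), x ∈ supported (ZMod p) (Mui.lowVars n) := by
    simp [Mui.lowVars]
  refine ⟨algebraicIndependent_iff.2 fun P hP =>
      Mui.eq_zero_of_aeval_hGen_eq_zero le_rfl (htop P) hP,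
    fun x => ⟨fun hx => ?_, Mui.isBorelInvariant_of_mem_adjoin⟩⟩
  exact Algebra.adjoin_mono (Set.image_subset_range _ _)
    (Mui.mem_adjoin_hGen_of_isBorelInvariant le_rfl (htop x) hx)
end

section
/- For i ≠ j with 0 ≤ i, j ≤ n-1, the sets of monomials in the h's occurring in d_{n,i} and in d_{n,j} are disjoint: if P_i, P_j ∈ MvPolynomial (Fin n) 𝔽_p satisfy aeval(h) P_i = d_{n,i} and aeval(h) P_j = d_{n,j} (where aeval(h) substitutes h_1, …, h_n for the n variables), then the supports of P_i and P_j are disjoint. -/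
/-!
Under the lexicographic order in which later variables dominate, the leading monomial of
`h_j = ∏_{u ∈ V_j} (y_j - u)^(p-1)` is a pure power `y_j^(w_j)` with `w_j = (p-1)|V_j| > 0`.
Distinct monomials in the `h`'s therefore have distinct leading monomials, so the `h`'s are
algebraically independent. Since `h_j` is homogeneous of degree `w_j`, substituting the `h`'s
sends the part of `P` of `w`-weighted degree `c` to the degree-`c` part of `P(h)`; by
injectivity, when `P(h)` is homogeneous of degree `c` every monomial of `P` has weight `c`.
Finally `d_{n,i}`, a signed elementary symmetric function of the linear forms in `V_n`, is
homogeneous of degree `p^n - p^i`, and these degrees are distinct for `i < n`.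
-/

open MvPolynomial

open MonomialOrder
open scoped MonomialOrder

namespace MonomialOrder

noncomputable def revLex (σ : Type*) [LinearOrder σ] [WellFoundedLT σ] : MonomialOrder σ :=
  lex (σ := σᵒᵈ)

lemma revLex_single_lt {σ : Type*} [LinearOrder σ] [WellFoundedLT σ] {i j : σ} (h : i < j) :
    Finsupp.single i 1 ≺[revLex σ] Finsupp.single j 1 :=
  Finsupp.Lex.single_lt_iff (α := σᵒᵈ) |>.2 h

variable {σ R : Type*} [CommRing R] [IsDomain R] {m : MonomialOrder σ}
  {φ : σ → MvPolynomial σ R} {w : σ → ℕ}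

lemma aeval_monomial_ne_zero (hφ : ∀ i, φ i ≠ 0) (t : σ →₀ ℕ) {r : R} (hr : r ≠ 0) :
    aeval φ (monomial t r) ≠ 0 := by
  rw [aeval_monomial, algebraMap_eq]
  exact mul_ne_zero (C_ne_zero.2 hr) (Finset.prod_ne_zero_iff.2 fun i _ => pow_ne_zero _ (hφ i))

lemma degree_aeval_monomial (hφ : ∀ i, m.degree (φ i) = Finsupp.single i (w i))
    (hφ0 : ∀ i, φ i ≠ 0) (t : σ →₀ ℕ) {r : R} (hr : r ≠ 0) :
    m.degree (aeval φ (monomial t r)) = t.sum fun i k => Finsupp.single i (k * w i) := by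
  rw [aeval_monomial, algebraMap_eq, Finsupp.prod, degree_mul (C_ne_zero.2 hr)
    (Finset.prod_ne_zero_iff.2 fun i _ => pow_ne_zero _ (hφ0 i)), degree_C, zero_add,
    degree_prod fun i _ => pow_ne_zero _ (hφ0 i)]
  refine Finset.sum_congr rfl fun i _ => ?_
  rw [degree_pow, hφ, Finsupp.smul_single, smul_eq_mul]

theorem injective_aeval_of_degree_eq_single (hφ : ∀ i, m.degree (φ i) = Finsupp.single i (w i))
    (hw : ∀ i, w i ≠ 0) : Function.Injective (aeval (R := R) φ) := by
  classical
  have hφ0 i : φ i ≠ 0 := m.ne_zero_of_degree_ne_zero <| by simpa [hφ] using hw i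
  rw [injective_iff_map_eq_zero]
  refine fun P ↦ (fun hP ↦ ?_).mtr
  rw [P.as_sum, map_sum]
  refine AddMonoidAlgebra.sum_ne_zero_of_injOn_supDegree (D := m.toSyn)
    (support_nonempty.2 hP) (fun t ht => aeval_monomial_ne_zero hφ0 t (mem_support_iff.1 ht)) ?_
  intro t ht s hs he
  simp only [Function.comp, Finset.mem_coe, mem_support_iff] at ht hs he
  have hdeg : m.degree (aeval φ (monomial t (coeff t P))) =
      m.degree (aeval φ (monomial s (coeff s P))) := congrArg m.toSyn.symm he
  rw [degree_aeval_monomial hφ hφ0 t ht, degree_aeval_monomial hφ hφ0 s hs] at hdeg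
  ext i
  have hcoord (u : σ →₀ ℕ) :
      (u.sum fun j k => Finsupp.single j (k * w j)) i = u i * w i := by
    simp only [Finsupp.sum_apply, Finsupp.single_apply, Finsupp.sum_ite_eq',
      Finsupp.mem_support_iff, ne_eq, ite_not]
    split_ifs with h <;> simp [h]
  exact Nat.eq_of_mul_eq_mul_right (Nat.pos_of_ne_zero (hw i))
    (by rw [← hcoord, ← hcoord, hdeg])

end MonomialOrder

namespace MvPolynomial

variable {σ τ R : Type*} [CommRing R]

lemma IsHomogeneous.neg_one_pow_mul {P : MvPolynomial σ R} {c : ℕ} (hP : P.IsHomogeneous c)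
    (k : ℕ) : ((-1) ^ k * P).IsHomogeneous c := by
  rcases neg_one_pow_eq_or (MvPolynomial σ R) k with h | h <;> simp [h, hP, hP.neg]

lemma isHomogeneous_coeff_prod_X_sub_C {s : Finset (MvPolynomial σ R)}
    (hs : ∀ u ∈ s, u.IsHomogeneous 1) {k : ℕ} (hk : k ≤ s.card) :
    ((∏ u ∈ s, (Polynomial.X - Polynomial.C u)).coeff k).IsHomogeneous (s.card - k) := by
  rw [Finset.prod_eq_multiset_prod, Multiset.prod_X_sub_C_coeff s.val hk, ← Multiset.map_id s.val,
    Finset.esymm_map_val]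
  refine IsHomogeneous.neg_one_pow_mul (IsHomogeneous.sum _ _ _ fun t ht => ?_) _
  simpa [(Finset.mem_powersetCard.1 ht).2] using
    IsHomogeneous.prod t id (fun _ => 1) fun u hu => hs u ((Finset.mem_powersetCard.1 ht).1 hu)

variable {φ : σ → MvPolynomial τ R} {w : σ → ℕ}

lemma isHomogeneous_aeval_monomial (hφ : ∀ i, (φ i).IsHomogeneous (w i)) (t : σ →₀ ℕ)
    (r : R) :
    (aeval φ (monomial t r)).IsHomogeneous (Finsupp.weight w t) := by
  rw [aeval_monomial, algebraMap_eq, Finsupp.weight_apply, Finsupp.sum, Finsupp.prod]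
  convert (IsHomogeneous.prod t.support _ (fun i => w i * t i) fun i _ => (hφ i).pow (t i)).C_mul r
    using 1
  simp only [smul_eq_mul, mul_comm]

lemma aeval_weightedHomogeneousComponent (hφ : ∀ i, (φ i).IsHomogeneous (w i)) (c : ℕ)
    (P : MvPolynomial σ R) :
    aeval φ (weightedHomogeneousComponent w c P) = homogeneousComponent c (aeval φ P) := by
  classical
  induction P using MvPolynomial.induction_on' with
  | monomial t r =>
    rw [weightedHomogeneousComponent_of_mem (isWeightedHomogeneous_monomial w t r rfl),
      homogeneousComponent_of_mem (isHomogeneous_aeval_monomial hφ t r)]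
    split_ifs <;> simp
  | add P Q hP hQ => simp only [map_add, hP, hQ]

theorem weight_eq_of_mem_support (hφ : ∀ i, (φ i).IsHomogeneous (w i))
    (hinj : Function.Injective (aeval (R := R) φ)) {P : MvPolynomial σ R} {c : ℕ}
    (hP : (aeval φ P).IsHomogeneous c) {t : σ →₀ ℕ} (ht : t ∈ P.support) :
    Finsupp.weight w t = c := by
  classical
  by_contra hne
  have hzero : weightedHomogeneousComponent w (Finsupp.weight w t) P = 0 := by
    refine hinj ?_
    rw [aeval_weightedHomogeneousComponent hφ, homogeneousComponent_of_mem hP, if_neg hne,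
      map_zero]
  have := congr(coeff t $hzero)
  rw [coeff_weightedHomogeneousComponent, if_pos rfl, coeff_zero] at this
  exact mem_support_iff.1 ht this

end MvPolynomial

section Dickson

variable {p n : ℕ} [Fact p.Prime]

lemma isHomogeneous_of_mem_V {k : ℕ} {u : MvPolynomial (Fin n) (ZMod p)} (hu : u ∈ V p n k) :
    u.IsHomogeneous 1 := by
  obtain ⟨c, -, rfl⟩ := Finset.mem_image.1 hu
  exact IsHomogeneous.sum _ _ _ fun j _ => isHomogeneous_C_mul_X _ _

lemma degree_lt_of_mem_V {j : Fin n} {u : MvPolynomial (Fin n) (ZMod p)} (hu : u ∈ V p n j) :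
    (revLex (Fin n)).degree u ≺[revLex (Fin n)] Finsupp.single j 1 := by
  obtain ⟨c, -, rfl⟩ := Finset.mem_image.1 hu
  refine degree_sum_le.trans_lt <| (Finset.sup_lt_iff ?_).2 fun i hi => ?_
  · simp [MonomialOrder.toSyn_lt_iff_ne_zero]
  · rw [C_mul_X_eq_monomial]
    exact (degree_monomial_le _).trans_lt (revLex_single_lt (Finset.mem_filter.1 hi).2)

lemma card_V_self : (V p n n).card = p ^ n := by
  rw [V, Finset.filter_true_of_mem fun j _ => j.isLt, Finset.card_image_of_injective,
    Finset.card_univ, Fintype.card_fun, Fintype.card_fin, ZMod.card]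
  intro c c' h
  ext i
  have := congr(coeff (Finsupp.single i 1) $h)
  simpa [coeff_sum, coeff_C_mul, coeff_X, Finsupp.single_left_inj] using this

lemma hGen_eq_prod (j : Fin n) : hGen p n j = (∏ u ∈ V p n j, (X j - u)) ^ (p - 1) := by
  simp [hGen, f, Polynomial.eval_prod]

lemma degree_hGen (j : Fin n) :
    (revLex (Fin n)).degree (hGen p n j) = Finsupp.single j ((p - 1) * (V p n j).card) := by
  have hfactor : ∀ u ∈ V p n j, (revLex (Fin n)).degree (X j - u) = Finsupp.single j 1 :=
    fun u hu => by rw [degree_sub_of_lt (by rw [degree_X]; exact degree_lt_of_mem_V hu), degree_X]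
  rw [hGen_eq_prod, degree_pow, degree_prod fun u hu =>
      (revLex (Fin n)).ne_zero_of_degree_ne_zero (by simp [hfactor u hu]),
    Finset.sum_congr rfl hfactor, Finset.sum_const, Finsupp.smul_single, Finsupp.smul_single]
  simp

lemma isHomogeneous_hGen (j : Fin n) :
    (hGen p n j).IsHomogeneous ((V p n j).card * (p - 1)) := by
  rw [hGen_eq_prod]
  refine IsHomogeneous.pow ?_ _
  simpa using IsHomogeneous.prod _ _ (fun _ => 1) fun u hu =>
    (isHomogeneous_X _ j).sub (isHomogeneous_of_mem_V hu)

lemma injective_aeval_hGen : Function.Injective (aeval (R := ZMod p) (hGen p n)) := by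
  refine injective_aeval_of_degree_eq_single degree_hGen fun j => ?_
  have hp : 1 < p := (Fact.out : p.Prime).one_lt
  have hV : (V p n j).Nonempty := Finset.univ_nonempty.image _
  exact Nat.mul_ne_zero (by omega) hV.card_pos.ne'

lemma isHomogeneous_d {i : ℕ} (hi : i ≤ n) : (d p n n i).IsHomogeneous (p ^ n - p ^ i) := by
  have hle : p ^ i ≤ (V p n n).card := by
    rw [card_V_self]
    exact Nat.pow_le_pow_right (Fact.out : p.Prime).pos hi
  rw [d, f]
  simpa only [card_V_self] using
    (isHomogeneous_coeff_prod_X_sub_C (fun u hu => isHomogeneous_of_mem_V hu) hle).neg_one_pow_mul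
      (n - i)

end Dickson

/-- for `i ≠ j` the sets of monomials (in the `h`'s) of `d_{n,i}` and
`d_{n,j}` are disjoint. -/
theorem stmt16 (p n : ℕ) [Fact p.Prime] (i j : ℕ) (hij : i ≠ j) (hi : i ≤ n - 1)
    (hj : j ≤ n - 1) (P₁ P₂ : MvPolynomial (Fin n) (ZMod p))
    (hP₁ : aeval (hGen p n) P₁ = d p n n i) (hP₂ : aeval (hGen p n) P₂ = d p n n j) :
    Disjoint P₁.support P₂.support := by
  have hp : p.Prime := Fact.out
  have hweight {k : ℕ} {P : MvPolynomial (Fin n) (ZMod p)} (hk : k ≤ n)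
      (hP : aeval (hGen p n) P = d p n n k) {t : Fin n →₀ ℕ} (ht : t ∈ P.support) :
      Finsupp.weight (fun j : Fin n => (V p n j).card * (p - 1)) t = p ^ n - p ^ k :=
    weight_eq_of_mem_support isHomogeneous_hGen injective_aeval_hGen
      (hP ▸ isHomogeneous_d hk) ht
  refine Finset.disjoint_left.2 fun t ht₁ ht₂ =>
    hij (Nat.pow_right_injective hp.two_le (?_ : p ^ i = p ^ j))
  have hpi : p ^ i ≤ p ^ n := Nat.pow_le_pow_right hp.pos (by omega)
  have hpj : p ^ j ≤ p ^ n := Nat.pow_le_pow_right hp.pos (by omega)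
  have hdeg := (hweight (by omega) hP₁ ht₁).symm.trans (hweight (by omega) hP₂ ht₂)
  omega
end
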